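/- Uncertainty principle for the landscape function, non-symmetric case (classical version): let λ ∈ (0,1), let Ω ⊆ ℝⁿ be open, let A = (A_{ij}) be a C¹ matrix-valued function on Ω (not necessarily symmetric) satisfying λ|ξ|² ≤ ⟨A(x)ξ, ξ⟩ and |A(x)ξ| ≤ λ⁻¹|ξ| for all x ∈ Ω and ξ ∈ ℝⁿ, let V : Ω → [0,∞) be continuous, and let u ∈ C²(Ω) satisfy u > 0 on Ω and −div(A∇u) + V u = 1 pointwise on Ω. Then for every smooth compactly supported real-valued f on Ω, ∫_Ω f²/u ≤ ∫_Ω [ λ⁻⁴ ⟨A∇f, ∇f⟩ + V f² ]. -/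

import Mathlib

open MeasureTheory Metric

noncomputable section

/-- Partial derivative `∂g/∂x_j` of a real-valued function on `ℝⁿ`. -/
def pdR {n : ℕ} (j : Fin n) (g : EuclideanSpace ℝ (Fin n) → ℝ)
    (x : EuclideanSpace ℝ (Fin n)) : ℝ :=
  fderiv ℝ g x (EuclideanSpace.single j 1)

/-- The bilinear expression `⟨A∇g, ∇h⟩(x) = Σ_i (Σ_j A_{ij}(x) ∂_j g(x)) ∂_i h(x)`. -/
def bform {n : ℕ} (A : EuclideanSpace ℝ (Fin n) → Fin n → Fin n → ℝ)
    (g h : EuclideanSpace ℝ (Fin n) → ℝ) (x : EuclideanSpace ℝ (Fin n)) : ℝ :=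
  ∑ i, (∑ j, A x i j * pdR j g x) * pdR i h x

theorem ibp_pi {n : ℕ} (g : Fin (n+1) → (Fin (n+1) → ℝ) → ℝ)
    (g' : Fin (n+1) → (Fin (n+1) → ℝ) → ((Fin (n+1) → ℝ) →L[ℝ] ℝ))
    (hd : ∀ i x, HasFDerivAt (g i) (g' i x) x)
    (R : ℝ) (hR : 0 < R)
    (hsupp : ∀ i (x : Fin (n+1) → ℝ), R ≤ ‖x‖ → g i x = 0)
    (hcont : Continuous fun x => ∑ i, g' i x (Pi.single i 1)) :
    ∫ x : Fin (n+1) → ℝ, ∑ i, g' i x (Pi.single i 1) = 0 := by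
  have hg'zero : ∀ i (x : Fin (n+1) → ℝ), R < ‖x‖ → g' i x = 0 := by
    intro i x hx
    have hnb : {y : Fin (n+1) → ℝ | R < ‖y‖} ∈ nhds x :=
      (isOpen_lt continuous_const continuous_norm).mem_nhds hx
    have hev : g i =ᶠ[nhds x] fun _ => (0:ℝ) :=
      Filter.eventually_of_mem hnb fun y hy => hsupp i y (le_of_lt hy)
    have h0 : HasFDerivAt (g i) 0 x :=
      (hasFDerivAt_const (𝕜 := ℝ) (0:ℝ) x).congr_of_eventuallyEq hev
    exact (hd i x).unique h0
  have hdivzero : ∀ x : Fin (n+1) → ℝ, R < ‖x‖ →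
      (∑ i, g' i x (Pi.single i 1)) = 0 := by
    intro x hx
    refine Finset.sum_eq_zero fun i _ => ?_
    rw [hg'zero i x hx]; rfl
  set a : Fin (n+1) → ℝ := fun _ => -(R+1) with ha
  set b : Fin (n+1) → ℝ := fun _ => (R+1) with hb
  have hle : a ≤ b := fun i => by simp only [a, b]; linarith
  have hCS : HasCompactSupport fun x => ∑ i, g' i x (Pi.single i 1) := by
    apply HasCompactSupport.of_support_subset_isCompact
      (isCompact_closedBall (0 : Fin (n+1) → ℝ) R)
    intro x hx
    simp only [Function.mem_support, ne_eq] at hx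
    by_contra hxb
    exact hx (hdivzero x (by simpa [mem_closedBall, dist_zero_right, not_le] using hxb))
  have hInt : Integrable fun x : Fin (n+1) → ℝ => ∑ i, g' i x (Pi.single i 1) :=
    hcont.integrable_of_hasCompactSupport hCS
  have key := MeasureTheory.integral_divergence_of_hasFDerivAt_off_countable'
    a b hle g g' ∅ Set.countable_empty
    (fun i => Continuous.continuousOn (continuous_iff_continuousAt.2
      fun x => (hd i x).differentiableAt.continuousAt))
    (fun x _ i => hd i x)
    hInt.integrableOn
  have hface : ∀ (i : Fin (n+1)) (c : ℝ), R ≤ |c| →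
      ∀ y : Fin n → ℝ, g i (i.insertNth c y) = 0 := by
    intro i c hc y
    apply hsupp
    have h1 : ‖(i.insertNth c y : Fin (n+1) → ℝ) i‖ ≤ ‖(i.insertNth c y : Fin (n+1) → ℝ)‖ :=
      norm_le_pi_norm _ i
    rw [Fin.insertNth_apply_same, Real.norm_eq_abs] at h1
    linarith
  have hfaces : ∀ i : Fin (n+1),
      ((∫ x in Set.Icc (a ∘ i.succAbove) (b ∘ i.succAbove), g i (i.insertNth (b i) x)) -
       ∫ x in Set.Icc (a ∘ i.succAbove) (b ∘ i.succAbove), g i (i.insertNth (a i) x)) = 0 := by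
    intro i
    rw [setIntegral_congr_fun measurableSet_Icc (g := fun _ => (0:ℝ))
        (fun y _ => hface i (b i) (by simp only [b]; rw [abs_of_nonneg (by linarith)]; linarith) y),
      setIntegral_congr_fun measurableSet_Icc (g := fun _ => (0:ℝ))
        (fun y _ => hface i (a i) (by simp only [a]; rw [abs_neg, abs_of_nonneg (by linarith)]; linarith) y)]
    simp
  have hIcc : (∫ x in Set.Icc a b, ∑ i, g' i x (Pi.single i 1)) = 0 := by
    rw [key]; exact Finset.sum_eq_zero fun i _ => hfaces i
  rw [← setIntegral_eq_integral_of_forall_compl_eq_zero (s := Set.Icc a b) (μ := volume)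
    (fun x hx => ?_), hIcc]
  apply hdivzero
  simp only [Set.mem_Icc, not_and_or, Pi.le_def, not_forall, not_le] at hx
  have hxi : ∃ i, R + 1 ≤ |x i| := by
    rcases hx with ⟨i, hi⟩ | ⟨i, hi⟩
    · exact ⟨i, by simp only [a] at hi; rw [abs_of_nonpos (by linarith)]; linarith⟩
    · exact ⟨i, by simp only [b] at hi; rw [abs_of_nonneg (by linarith)]; linarith⟩
  obtain ⟨i, hi⟩ := hxi
  have h2 : ‖x i‖ ≤ ‖x‖ := norm_le_pi_norm x i
  rw [Real.norm_eq_abs] at h2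
  linarith

theorem ibp_euc{n : ℕ} (W : Fin n → EuclideanSpace ℝ (Fin n) → ℝ)
    (W' : Fin n → EuclideanSpace ℝ (Fin n) → (EuclideanSpace ℝ (Fin n) →L[ℝ] ℝ))
    (hd : ∀ i x, HasFDerivAt (W i) (W' i x) x)
    (K : Set (EuclideanSpace ℝ (Fin n))) (hK : IsCompact K)
    (hsupp : ∀ i x, x ∉ K → W i x = 0)
    (hcont : Continuous fun x => ∑ i, W' i x (EuclideanSpace.single i 1)) :
    ∫ x : EuclideanSpace ℝ (Fin n), ∑ i, W' i x (EuclideanSpace.single i 1) = 0 := by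
  cases n with
  | zero => simp
  | succ m =>
    set e := EuclideanSpace.equiv (Fin (m+1)) ℝ with he
    set meq := (MeasurableEquiv.toLp 2 (Fin (m+1) → ℝ)).symm with hmeq
    -- bounded image
    obtain ⟨R, hRpos, hKR⟩ : ∃ R : ℝ, 0 < R ∧
        ∀ y : Fin (m+1) → ℝ, R ≤ ‖y‖ → (e.symm y : EuclideanSpace ℝ (Fin (m+1))) ∉ K := by
      obtain ⟨R, hR⟩ := (hK.image e.continuous).isBounded.subset_closedBall 0
      refine ⟨max R 0 + 1, by positivity, fun y hy hyK => ?_⟩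
      have : y ∈ Metric.closedBall (0 : Fin (m+1) → ℝ) R := by
        have : y ∈ e '' K := ⟨e.symm y, hyK, by simp⟩
        exact hR this
      rw [mem_closedBall, dist_zero_right] at this
      have := le_max_left R 0
      linarith
    set g : Fin (m+1) → (Fin (m+1) → ℝ) → ℝ := fun i y => W i (e.symm y) with hg
    set g' : Fin (m+1) → (Fin (m+1) → ℝ) → ((Fin (m+1) → ℝ) →L[ℝ] ℝ) :=
      fun i y => (W' i (e.symm y)).comp (e.symm : (Fin (m+1) → ℝ) →L[ℝ] _) with hg'
    have hd' : ∀ i y, HasFDerivAt (g i) (g' i y) y := fun i y =>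
      (hd i (e.symm y)).comp y (e.symm.toContinuousLinearMap.hasFDerivAt)
    have hsingle : ∀ i : Fin (m+1),
        (e.symm (Pi.single i 1) : EuclideanSpace ℝ (Fin (m+1))) = EuclideanSpace.single i 1 := by
      intro i; rfl
    have hdiv : ∀ y : Fin (m+1) → ℝ,
        (∑ i, g' i y (Pi.single i 1)) = ∑ i, W' i (e.symm y) (EuclideanSpace.single i 1) := by
      intro y
      refine Finset.sum_congr rfl fun i _ => ?_
      simp [hg', hsingle i]
    have key := ibp_pi g g' hd' R hRpos (fun i y hy => hsupp i _ (hKR y hy))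
      (by simpa only [hdiv, Function.comp_def] using
        (hcont.comp (e.symm.continuous : Continuous (e.symm : (Fin (m+1) → ℝ) → _))))
    have tr := (EuclideanSpace.volume_preserving_symm_measurableEquiv_toLp (Fin (m+1))).integral_comp
      meq.measurableEmbedding (fun y => ∑ i, g' i y (Pi.single i 1))
    rw [← tr] at key
    rw [← key]
    rfl

/-- the landscape density `f²/u`. -/
def vfun {n : ℕ} (f u : EuclideanSpace ℝ (Fin n) → ℝ) (x : EuclideanSpace ℝ (Fin n)) : ℝ :=
  f x ^ 2 / u x

/-- components of the vector field `A ∇u`. -/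
def Fvec {n : ℕ} (A : EuclideanSpace ℝ (Fin n) → Fin n → Fin n → ℝ)
    (u : EuclideanSpace ℝ (Fin n) → ℝ) (i : Fin n) (y : EuclideanSpace ℝ (Fin n)) : ℝ :=
  ∑ j, A y i j * pdR j u y

/-- components of the vector field `(f²/u) A∇u`. -/
def Wfun {n : ℕ} (A : EuclideanSpace ℝ (Fin n) → Fin n → Fin n → ℝ)
    (u f : EuclideanSpace ℝ (Fin n) → ℝ) (i : Fin n) (x : EuclideanSpace ℝ (Fin n)) : ℝ :=
  vfun f u x * Fvec A u i x

/-- Pure real-variable form of the pointwise inequality. -/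
theorem pointwise_abstract (lam fx ux vx Vx Su Sf sa sb P B : ℝ)
    (hl0 : 0 < lam) (hux : 0 < ux)
    (hsa0 : 0 ≤ sa) (hsb0 : 0 ≤ sb)
    (hSu : lam * sa ^ 2 ≤ Su) (hP : lam * sb ^ 2 ≤ P)
    (hSf : |Sf| ≤ lam⁻¹ * sa * sb)
    (hvx : vx * ux = fx ^ 2)
    (hB : ux ^ 2 * B = 2 * fx * ux * Sf - fx ^ 2 * Su) :
    B + Vx * ux * vx ≤ (lam ^ 4)⁻¹ * P + Vx * fx ^ 2 := by
  have hune' : ux ≠ 0 := hux.ne'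
  have hVterm : Vx * ux * vx = Vx * fx ^ 2 := by rw [← hvx]; ring
  have hb : B ≤ (lam ^ 4)⁻¹ * P := by
    have hlfS : lam * (fx * Sf) ≤ |fx| * (sa * sb) := by
      have h1 : fx * Sf ≤ |fx| * |Sf| := by
        calc fx * Sf ≤ |fx * Sf| := le_abs_self _
          _ = |fx| * |Sf| := abs_mul _ _
      calc lam * (fx * Sf) ≤ lam * (|fx| * |Sf|) :=
            mul_le_mul_of_nonneg_left h1 hl0.le
        _ ≤ lam * (|fx| * (lam⁻¹ * sa * sb)) :=
            mul_le_mul_of_nonneg_left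
              (mul_le_mul_of_nonneg_left hSf (abs_nonneg _)) hl0.le
        _ = |fx| * (sa * sb) := by
            field_simp
    have hpoly : lam ^ 4 * (2 * fx * ux * Sf - fx ^ 2 * Su) ≤ ux ^ 2 * P := by
      have hq := sq_nonneg (lam ^ 2 * |fx| * sa - ux * sb)
      have h1 : 2 * (ux * lam ^ 3) * (lam * (fx * Sf))
          ≤ 2 * (ux * lam ^ 3) * (|fx| * (sa * sb)) :=
        mul_le_mul_of_nonneg_left hlfS (by positivity)
      have h2 : lam ^ 4 * fx ^ 2 * (lam * sa ^ 2) ≤ lam ^ 4 * fx ^ 2 * Su :=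
        mul_le_mul_of_nonneg_left hSu (by positivity)
      have h3 : ux ^ 2 * (lam * sb ^ 2) ≤ ux ^ 2 * P :=
        mul_le_mul_of_nonneg_left hP (sq_nonneg _)
      have h4' : 2 * (ux * lam ^ 3) * (|fx| * (sa * sb))
          ≤ lam ^ 4 * fx ^ 2 * (lam * sa ^ 2) + ux ^ 2 * (lam * sb ^ 2) := by
        have habs : fx ^ 2 = |fx| ^ 2 := (sq_abs _).symm
        rw [habs]
        nlinarith [hq, hl0.le]
      linarith [h1, h2, h3, h4']
    have hbeq : B = (2 * fx * ux * Sf - fx ^ 2 * Su) / ux ^ 2 := by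
      rw [eq_div_iff (pow_ne_zero 2 hune')]
      linear_combination hB
    rw [hbeq, div_le_iff₀ (by positivity : (0:ℝ) < ux ^ 2)]
    calc 2 * fx * ux * Sf - fx ^ 2 * Su
        = (lam ^ 4)⁻¹ * (lam ^ 4 * (2 * fx * ux * Sf - fx ^ 2 * Su)) := by
          field_simp
      _ ≤ (lam ^ 4)⁻¹ * (ux ^ 2 * P) :=
          mul_le_mul_of_nonneg_left hpoly (by positivity)
      _ = (lam ^ 4)⁻¹ * P * ux ^ 2 := by ring
  linarith

/-- Uncertainty principle for the landscape function in the non-symmetric case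
(classical version): if `A` is elliptic with constant `λ ∈ (0,1)` and `u > 0` solves
`−div(A∇u) + Vu = 1` on `Ω`, then for every smooth compactly supported real `f`,
`∫ f²/u ≤ ∫[λ⁻⁴⟨A∇f,∇f⟩ + Vf²]`. -/
theorem landscape_uncertainty_principle_nonsymmetric
    (n : ℕ) (lam : ℝ) (hlam : 0 < lam ∧ lam < 1)
    (Ω : Set (EuclideanSpace ℝ (Fin n))) (hΩ : IsOpen Ω)
    (A : EuclideanSpace ℝ (Fin n) → Fin n → Fin n → ℝ)
    (hA : ∀ i j, ContDiffOn ℝ 1 (fun x => A x i j) Ω)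
    (hell : ∀ x ∈ Ω, ∀ ξ : Fin n → ℝ,
      lam * ∑ i, ξ i ^ 2 ≤ ∑ i, (∑ j, A x i j * ξ j) * ξ i)
    (hbdd : ∀ x ∈ Ω, ∀ ξ : Fin n → ℝ,
      Real.sqrt (∑ i, (∑ j, A x i j * ξ j) ^ 2) ≤ lam⁻¹ * Real.sqrt (∑ i, ξ i ^ 2))
    (V : EuclideanSpace ℝ (Fin n) → ℝ) (hVc : ContinuousOn V Ω)
    (hV0 : ∀ x ∈ Ω, 0 ≤ V x)
    (u : EuclideanSpace ℝ (Fin n) → ℝ) (hu : ContDiffOn ℝ 2 u Ω)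
    (hupos : ∀ x ∈ Ω, 0 < u x)
    (hueq : ∀ x ∈ Ω,
      -(∑ i, pdR i (fun y => ∑ j, A y i j * pdR j u y) x) + V x * u x = 1)
    (f : EuclideanSpace ℝ (Fin n) → ℝ) (hf : ContDiff ℝ (⊤ : ℕ∞) f)
    (hfc : HasCompactSupport f) (hfs : tsupport f ⊆ Ω) :
    ∫ x in Ω, f x ^ 2 / u x
      ≤ ∫ x in Ω, ((lam ^ 4)⁻¹ * bform A f f x + V x * f x ^ 2) := by
  obtain ⟨hl0, hl1⟩ := hlam
  have hueqF : ∀ x ∈ Ω, -(∑ i, pdR i (Fvec A u i) x) + V x * u x = 1 := hueq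
  have hf0 : ∀ x, x ∉ tsupport f → f x = 0 := fun x hx => image_eq_zero_of_notMem_tsupport hx
  have hv0 : ∀ x, x ∉ tsupport f → vfun f u x = 0 := by
    intro x hx; simp [vfun, hf0 x hx]
  have hcompl : ∀ x, x ∉ tsupport f → (tsupport f)ᶜ ∈ nhds x := fun x hx =>
    (isClosed_tsupport f).isOpen_compl.mem_nhds hx
  have hvev : ∀ x, x ∉ tsupport f → vfun f u =ᶠ[nhds x] fun _ => 0 := fun x hx =>
    Filter.eventually_of_mem (hcompl x hx) fun y hy => hv0 y hy
  have hWev : ∀ i x, x ∉ tsupport f → Wfun A u f i =ᶠ[nhds x] fun _ => 0 := fun i x hx =>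
    Filter.eventually_of_mem (hcompl x hx) fun y hy => by simp [Wfun, hv0 y hy]
  have hune : ∀ x ∈ Ω, u x ≠ 0 := fun x hx => (hupos x hx).ne'
  -- smoothness
  have hucont : ContinuousOn u Ω := hu.continuousOn
  have hvC : ContDiffOn ℝ 1 (vfun f u) Ω :=
    ContDiffOn.div ((hf.pow 2).contDiffOn.of_le (by simp)) (hu.of_le (by exact_mod_cast (by norm_num : (1:ℕ∞) ≤ 2))) hune
  have hderivuC : ContDiffOn ℝ 1 (fderiv ℝ u) Ω := hu.fderiv_of_isOpen hΩ (by norm_num)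
  have hpduC : ∀ j, ContDiffOn ℝ 1 (pdR j u) Ω := fun j =>
    hderivuC.clm_apply contDiffOn_const
  have hFC : ∀ i, ContDiffOn ℝ 1 (Fvec A u i) Ω := fun i =>
    ContDiffOn.sum fun j _ => (hA i j).mul (hpduC j)
  have hWC : ∀ i, ContDiffOn ℝ 1 (Wfun A u f i) Ω := fun i => hvC.mul (hFC i)
  have hudΩ : ∀ x ∈ Ω, DifferentiableAt ℝ u x := fun x hx =>
    ((hu.of_le (m := 1) (by exact_mod_cast (by norm_num : (1:ℕ∞) ≤ 2))).differentiableOn one_ne_zero).differentiableAt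
      (hΩ.mem_nhds hx)
  have hvdΩ : ∀ x ∈ Ω, DifferentiableAt ℝ (vfun f u) x := fun x hx =>
    (hvC.differentiableOn one_ne_zero).differentiableAt (hΩ.mem_nhds hx)
  have hFdΩ : ∀ i, ∀ x ∈ Ω, DifferentiableAt ℝ (Fvec A u i) x := fun i x hx =>
    ((hFC i).differentiableOn one_ne_zero).differentiableAt (hΩ.mem_nhds hx)
  have hWdiff : ∀ i x, DifferentiableAt ℝ (Wfun A u f i) x := by
    intro i x
    by_cases hx : x ∈ Ω
    · exact ((hWC i).differentiableOn one_ne_zero).differentiableAt (hΩ.mem_nhds hx)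
    · have hxK : x ∉ tsupport f := fun h => hx (hfs h)
      exact (differentiableAt_const (0:ℝ)).congr_of_eventuallyEq (hWev i x hxK)
  have hfderivW0 : ∀ i x, x ∉ tsupport f → fderiv ℝ (Wfun A u f i) x = 0 := by
    intro i x hx
    rw [(hWev i x hx).fderiv_eq]
    exact fderiv_const_apply 0
  -- divergence continuity
  have hdivWcont : Continuous fun x => ∑ i, pdR i (Wfun A u f i) x := by
    rw [continuous_iff_continuousAt]
    intro x
    by_cases hx : x ∈ Ω
    · have hco : ContinuousOn (fun x => ∑ i, pdR i (Wfun A u f i) x) Ω := by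
        apply continuousOn_finset_sum
        intro i _
        exact (((hWC i).continuousOn_fderiv_of_isOpen hΩ le_rfl).clm_apply continuousOn_const :
          ContinuousOn (fun x => fderiv ℝ (Wfun A u f i) x (EuclideanSpace.single i 1)) Ω)
      exact hco.continuousAt (hΩ.mem_nhds hx)
    · have hxK : x ∉ tsupport f := fun h => hx (hfs h)
      have hev : (fun x => ∑ i, pdR i (Wfun A u f i) x) =ᶠ[nhds x] fun _ => 0 := by
        refine Filter.eventually_of_mem (hcompl x hxK) fun y hy => ?_
        refine Finset.sum_eq_zero fun i _ => ?_
        simp only [pdR, hfderivW0 i y hy]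
        rfl
      rw [continuousAt_congr hev]
      exact continuousAt_const
  -- integration by parts
  have hibp : ∫ x : EuclideanSpace ℝ (Fin n), ∑ i, pdR i (Wfun A u f i) x = 0 := by
    exact ibp_euc (Wfun A u f) (fun i x => fderiv ℝ (Wfun A u f i) x)
      (fun i x => (hWdiff i x).hasFDerivAt) (tsupport f) hfc
      (fun i x hx => by simp [Wfun, hv0 x hx]) hdivWcont
  have hibpΩ : ∫ x in Ω, ∑ i, pdR i (Wfun A u f i) x = 0 := by
    rw [setIntegral_eq_integral_of_forall_compl_eq_zero (fun x hx => ?_), hibp]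
    have hxK : x ∉ tsupport f := fun h => hx (hfs h)
    refine Finset.sum_eq_zero fun i _ => ?_
    simp only [pdR, hfderivW0 i x hxK]
    rfl
  -- product rule
  have hprod : ∀ x ∈ Ω, ∑ i, pdR i (Wfun A u f i) x
      = bform A u (vfun f u) x + vfun f u x * ∑ i, pdR i (Fvec A u i) x := by
    intro x hx
    have hterm : ∀ i, pdR i (Wfun A u f i) x
        = vfun f u x * pdR i (Fvec A u i) x + Fvec A u i x * pdR i (vfun f u) x := by
      intro i
      simp only [pdR]
      rw [show (Wfun A u f i) = fun y => vfun f u y * Fvec A u i y from rfl,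
        fderiv_fun_mul (hvdΩ x hx) (hFdΩ i x hx)]
      simp [ContinuousLinearMap.add_apply, ContinuousLinearMap.smul_apply, smul_eq_mul]
    rw [Finset.sum_congr rfl fun i _ => hterm i, Finset.sum_add_distrib, Finset.mul_sum]
    have hbf : bform A u (vfun f u) x = ∑ i, Fvec A u i x * pdR i (vfun f u) x := rfl
    rw [hbf, add_comm]
  -- integrability helper
  have hIntOn : ∀ g : EuclideanSpace ℝ (Fin n) → ℝ, ContinuousOn g Ω →
      (∀ x, x ∉ tsupport f → g x = 0) → IntegrableOn g Ω := by
    intro g hgc hg0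
    have h1 : IntegrableOn g (tsupport f) :=
      (hgc.mono hfs).integrableOn_compact hfc
    have h2 : IntegrableOn g (Ω \ tsupport f) := by
      refine (integrableOn_zero (μ := volume)).congr_fun (fun x hx => (hg0 x hx.2).symm)
        (hΩ.measurableSet.diff (isClosed_tsupport f).measurableSet)
    exact (h1.union h2).mono_set fun x hx => by
      by_cases h : x ∈ tsupport f
      · exact Set.mem_union_left _ h
      · exact Set.mem_union_right _ ⟨hx, h⟩
  have hpdfcont : ∀ j, Continuous (pdR j f) := fun j =>
    (hf.continuous_fderiv (by simp)).clm_apply continuous_const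
  have hpdf0 : ∀ j x, x ∉ tsupport f → pdR j f x = 0 := by
    intro j x hx
    have hev : f =ᶠ[nhds x] fun _ => 0 := Filter.eventually_of_mem (hcompl x hx)
      fun y hy => hf0 y hy
    simp only [pdR, hev.fderiv_eq]
    rw [fderiv_const_apply]
    rfl
  have hpdv0 : ∀ i x, x ∉ tsupport f → pdR i (vfun f u) x = 0 := by
    intro i x hx
    simp only [pdR, (hvev x hx).fderiv_eq]
    rw [fderiv_const_apply]
    rfl
  have hpdvcontOn : ∀ i, ContinuousOn (pdR i (vfun f u)) Ω := fun i =>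
    (hvC.continuousOn_fderiv_of_isOpen hΩ le_rfl).clm_apply continuousOn_const
  have hFcontOn : ∀ i, ContinuousOn (Fvec A u i) Ω := fun i => (hFC i).continuousOn
  have hI1 : IntegrableOn (fun x => f x ^ 2 / u x) Ω := by
    refine hIntOn _ (((hf.continuous.pow 2).continuousOn).div hucont hune) fun x hx => by
      simp [hf0 x hx]
  have hI2 : IntegrableOn (bform A u (vfun f u)) Ω := by
    refine hIntOn _ ?_ ?_
    · apply continuousOn_finset_sum
      intro i _
      exact ((hFC i).continuousOn.congr fun y hy => rfl).mul (hpdvcontOn i)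
    · intro x hx
      exact Finset.sum_eq_zero fun i _ => by rw [hpdv0 i x hx, mul_zero]
  have hI3 : IntegrableOn (fun x => vfun f u x * ∑ i, pdR i (Fvec A u i) x) Ω := by
    refine hIntOn _ (ContinuousOn.mul hvC.continuousOn ?_) fun x hx => by
      rw [hv0 x hx, zero_mul]
    apply continuousOn_finset_sum
    intro i _
    exact ((hFC i).continuousOn_fderiv_of_isOpen hΩ le_rfl).clm_apply continuousOn_const
  have hI4 : IntegrableOn (fun x => V x * u x * vfun f u x) Ω := by
    refine hIntOn _ ((hVc.mul hucont).mul hvC.continuousOn) fun x hx => by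
      rw [hv0 x hx, mul_zero]
  have hI5 : IntegrableOn (fun x => (lam ^ 4)⁻¹ * bform A f f x + V x * f x ^ 2) Ω := by
    refine hIntOn _ ?_ ?_
    · apply ContinuousOn.add
      · apply ContinuousOn.mul continuousOn_const
        apply continuousOn_finset_sum
        intro i _
        refine ContinuousOn.mul ?_ (hpdfcont i).continuousOn
        apply continuousOn_finset_sum
        intro j _
        exact ((hA i j).continuousOn).mul (hpdfcont j).continuousOn
      · exact hVc.mul ((hf.continuous.pow 2).continuousOn)
    · intro x hx
      have hbf : bform A f f x = 0 := Finset.sum_eq_zero fun i _ => by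
        rw [hpdf0 i x hx, mul_zero]
      simp [hbf, hf0 x hx]
  -- the pointwise inequality
  have hpointwise : ∀ x ∈ Ω, bform A u (vfun f u) x + V x * u x * vfun f u x
      ≤ (lam ^ 4)⁻¹ * bform A f f x + V x * f x ^ 2 := by
    intro x hx
    have hux := hupos x hx
    have hune' : u x ≠ 0 := hux.ne'
    -- Leibniz rule for v = f²/u via u·v = f·f
    have hpdv : ∀ i, u x * pdR i (vfun f u) x + vfun f u x * pdR i u x
        = 2 * f x * pdR i f x := by
      intro i
      have h1 : fderiv ℝ (fun y => u y * vfun f u y) x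
          = u x • fderiv ℝ (vfun f u) x + vfun f u x • fderiv ℝ u x :=
        fderiv_fun_mul (hudΩ x hx) (hvdΩ x hx)
      have hev : (fun y => u y * vfun f u y) =ᶠ[nhds x] (fun y => f y * f y) := by
        refine Filter.eventually_of_mem (hΩ.mem_nhds hx) fun y hy => ?_
        have hy0 : u y ≠ 0 := hune y hy
        simp only [vfun]
        field_simp
      have h2 : fderiv ℝ (fun y => f y * f y) x
          = f x • fderiv ℝ f x + f x • fderiv ℝ f x :=
        fderiv_fun_mul (hf.differentiable (by simp) x) (hf.differentiable (by simp) x)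
      have h4 : u x • fderiv ℝ (vfun f u) x + vfun f u x • fderiv ℝ u x
          = f x • fderiv ℝ f x + f x • fderiv ℝ f x := by
        rw [← h1, hev.fderiv_eq, h2]
      have h5 := congrArg (fun L : EuclideanSpace ℝ (Fin n) →L[ℝ] ℝ =>
        L (EuclideanSpace.single i 1)) h4
      simp only [ContinuousLinearMap.add_apply, ContinuousLinearMap.smul_apply,
        smul_eq_mul] at h5
      simp only [pdR]
      linarith [h5]
    have ha2 : (0:ℝ) ≤ ∑ i, (pdR i u x) ^ 2 := Finset.sum_nonneg fun i _ => sq_nonneg _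
    have hb2 : (0:ℝ) ≤ ∑ i, (pdR i f x) ^ 2 := Finset.sum_nonneg fun i _ => sq_nonneg _
    have hF2 : (0:ℝ) ≤ ∑ i, (Fvec A u i x) ^ 2 := Finset.sum_nonneg fun i _ => sq_nonneg _
    have hSu : lam * Real.sqrt (∑ i, (pdR i u x) ^ 2) ^ 2
        ≤ ∑ i, Fvec A u i x * pdR i u x := by
      rw [Real.sq_sqrt ha2]
      exact hell x hx (fun j => pdR j u x)
    have hP : lam * Real.sqrt (∑ i, (pdR i f x) ^ 2) ^ 2 ≤ bform A f f x := by
      rw [Real.sq_sqrt hb2]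
      exact hell x hx (fun j => pdR j f x)
    have hCS : (∑ i, Fvec A u i x * pdR i f x) ^ 2
        ≤ (∑ i, (Fvec A u i x) ^ 2) * (∑ i, (pdR i f x) ^ 2) :=
      Finset.sum_mul_sq_le_sq_mul_sq Finset.univ (fun i => Fvec A u i x)
        (fun i => pdR i f x)
    have hFb : Real.sqrt (∑ i, (Fvec A u i x) ^ 2)
        ≤ lam⁻¹ * Real.sqrt (∑ i, (pdR i u x) ^ 2) :=
      hbdd x hx (fun j => pdR j u x)
    have hSf : |∑ i, Fvec A u i x * pdR i f x|
        ≤ lam⁻¹ * Real.sqrt (∑ i, (pdR i u x) ^ 2) * Real.sqrt (∑ i, (pdR i f x) ^ 2) := by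
      rw [← Real.sqrt_sq_eq_abs]
      calc Real.sqrt ((∑ i, Fvec A u i x * pdR i f x) ^ 2)
          ≤ Real.sqrt ((∑ i, (Fvec A u i x) ^ 2) * (∑ i, (pdR i f x) ^ 2)) :=
            Real.sqrt_le_sqrt hCS
        _ = Real.sqrt (∑ i, (Fvec A u i x) ^ 2) * Real.sqrt (∑ i, (pdR i f x) ^ 2) := by
            rw [Real.sqrt_mul hF2]
        _ ≤ lam⁻¹ * Real.sqrt (∑ i, (pdR i u x) ^ 2) * Real.sqrt (∑ i, (pdR i f x) ^ 2) :=
            mul_le_mul_of_nonneg_right hFb (Real.sqrt_nonneg _)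
    have hvx : vfun f u x * u x = f x ^ 2 := by
      simp only [vfun]
      field_simp
    -- the algebraic identity u² ⟨A∇u, ∇v⟩ = 2fu·Sf − f²·Su
    have hu2b : u x ^ 2 * bform A u (vfun f u) x
        = 2 * f x * u x * (∑ i, Fvec A u i x * pdR i f x)
          - f x ^ 2 * (∑ i, Fvec A u i x * pdR i u x) := by
      have hterm : ∀ i, u x ^ 2 * (Fvec A u i x * pdR i (vfun f u) x)
          = 2 * f x * u x * (Fvec A u i x * pdR i f x)
            - f x ^ 2 * (Fvec A u i x * pdR i u x) := by
        intro i
        linear_combination (u x * Fvec A u i x) * hpdv i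
          - (Fvec A u i x * pdR i u x) * hvx
      have hbf : bform A u (vfun f u) x = ∑ i, Fvec A u i x * pdR i (vfun f u) x := rfl
      rw [hbf, Finset.mul_sum, Finset.sum_congr rfl fun i _ => hterm i,
        Finset.sum_sub_distrib, ← Finset.mul_sum, ← Finset.mul_sum]
    exact pointwise_abstract lam (f x) (u x) (vfun f u x) (V x)
      (∑ i, Fvec A u i x * pdR i u x) (∑ i, Fvec A u i x * pdR i f x)
      (Real.sqrt (∑ i, (pdR i u x) ^ 2)) (Real.sqrt (∑ i, (pdR i f x) ^ 2))
      (bform A f f x) (bform A u (vfun f u) x)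
      hl0 hux (Real.sqrt_nonneg _) (Real.sqrt_nonneg _) hSu hP hSf hvx hu2b
  -- IBP consequence
  have hbvS : ∫ x in Ω, bform A u (vfun f u) x
      = ∫ x in Ω, -(vfun f u x * ∑ i, pdR i (Fvec A u i) x) := by
    have h0 : ∫ x in Ω, (bform A u (vfun f u) x + vfun f u x * ∑ i, pdR i (Fvec A u i) x) = 0 := by
      rw [← setIntegral_congr_fun hΩ.measurableSet hprod, hibpΩ]
    rw [integral_add hI2 hI3] at h0
    rw [integral_neg]
    linarith
  calc ∫ x in Ω, f x ^ 2 / u x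
      = ∫ x in Ω, (-(vfun f u x * ∑ i, pdR i (Fvec A u i) x) + V x * u x * vfun f u x) := by
        refine setIntegral_congr_fun hΩ.measurableSet fun x hx => ?_
        have h1 := hueqF x hx
        have h2 : (f x ^ 2 / u x) = vfun f u x := rfl
        rw [h2]
        linear_combination (-(vfun f u x)) * h1
    _ = (∫ x in Ω, -(vfun f u x * ∑ i, pdR i (Fvec A u i) x))
        + ∫ x in Ω, V x * u x * vfun f u x := integral_add hI3.neg hI4
    _ = (∫ x in Ω, bform A u (vfun f u) x) + ∫ x in Ω, V x * u x * vfun f u x := by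
        rw [hbvS]
    _ = ∫ x in Ω, (bform A u (vfun f u) x + V x * u x * vfun f u x) :=
        (integral_add hI2 hI4).symm
    _ ≤ ∫ x in Ω, ((lam ^ 4)⁻¹ * bform A f f x + V x * f x ^ 2) :=
        setIntegral_mono_on (hI2.add hI4) hI5 hΩ.measurableSet hpointwise
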